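/- Let α_{m,n} denote the number of locally saturated tableaux in [m]×[n] (tableaux avoiding all 2×2 patterns with exactly three crosses) and let LST_{m,n}(p,q), for 1 ≤ p ≤ m−1 and 1 ≤ q ≤ n−1, denote the set of locally saturated tableaux T ⊆ [m]×[n] disjoint from the zone F = ([m−p]×[q]) ∪ ({m−p,…,m−1}×{q,…,n−1}). Then #LST_{m,n}(p,q) = α_{p,q}·α_{m−p,n−q}, and there is an injection from LST_{m,n}(p,q) into LST_{m,n}(1,1); consequently α_{p,q}·α_{m−p,n−q} ≤ 2·α_{m−1,n−1} for all such p, q. -/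
import Mathlib


/-- A tableau is locally saturated if it contains no 2×2 pattern with exactly
three of the four cells present. -/
def LocSat {m n : ℕ} (T : Finset (Fin m × Fin n)) : Prop :=
  ∀ (i₁ i₂ : Fin m) (j₁ j₂ : Fin n), i₁ ≠ i₂ → j₁ ≠ j₂ →
    ¬(((i₁, j₁) ∈ T ∧ (i₁, j₂) ∈ T ∧ (i₂, j₁) ∈ T ∧ (i₂, j₂) ∉ T) ∨
      ((i₁, j₁) ∈ T ∧ (i₁, j₂) ∈ T ∧ (i₂, j₁) ∉ T ∧ (i₂, j₂) ∈ T) ∨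
      ((i₁, j₁) ∈ T ∧ (i₁, j₂) ∉ T ∧ (i₂, j₁) ∈ T ∧ (i₂, j₂) ∈ T) ∨
      ((i₁, j₁) ∉ T ∧ (i₁, j₂) ∈ T ∧ (i₂, j₁) ∈ T ∧ (i₂, j₂) ∈ T))

/-- `α_{m,n}`: the number of locally saturated tableaux in `[m]×[n]`. -/
noncomputable def alphaLS (m n : ℕ) : ℕ :=
  Nat.card {T : Finset (Fin m × Fin n) // LocSat T}

/-- The forbidden zone `F = ([m-p]×[q]) ∪ ({m-p,…,m-1}×{q,…,n-1})`. -/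
def zoneF (m n p q : ℕ) : Set (Fin m × Fin n) :=
  {x | (x.1.val < m - p ∧ x.2.val < q) ∨ (m - p ≤ x.1.val ∧ q ≤ x.2.val)}

/-- `LST_{m,n}(p,q)`: the locally saturated tableaux disjoint from the zone
`([m-p]×[q]) ∪ ({m-p,…,m-1}×{q,…,n-1})`. -/
def LST (m n p q : ℕ) : Set (Finset (Fin m × Fin n)) :=
  {T | LocSat T ∧ ∀ x ∈ T, x ∉ zoneF m n p q}


namespace LSTAux


open Finset

/-- laminarity of a row-set function -/
def Lam {ι κ : Type*} (f : ι → Finset κ) : Prop :=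
  ∀ i j, f i = f j ∨ Disjoint (f i) (f j)

def Mf (a b : ℕ) := {f : Fin a → Finset (Fin b) // Lam f}

def rowF {m n : ℕ} (T : Finset (Fin m × Fin n)) : Fin m → Finset (Fin n) :=
  fun i => univ.filter fun j => (i, j) ∈ T

def tabOf {m n : ℕ} (f : Fin m → Finset (Fin n)) : Finset (Fin m × Fin n) :=
  univ.filter fun x => x.2 ∈ f x.1

@[simp] lemma mem_rowF {m n : ℕ} {T : Finset (Fin m × Fin n)} {i : Fin m} {j : Fin n} :
    j ∈ rowF T i ↔ (i, j) ∈ T := by simp [rowF]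

@[simp] lemma mem_tabOf {m n : ℕ} {f : Fin m → Finset (Fin n)} {x : Fin m × Fin n} :
    x ∈ tabOf f ↔ x.2 ∈ f x.1 := by simp [tabOf]

@[simp] lemma rowF_tabOf {m n : ℕ} (f : Fin m → Finset (Fin n)) : rowF (tabOf f) = f := by
  funext i; ext j; simp

@[simp] lemma tabOf_rowF {m n : ℕ} (T : Finset (Fin m × Fin n)) : tabOf (rowF T) = T := by
  ext x; simp

lemma locSat_iff {m n : ℕ} (T : Finset (Fin m × Fin n)) : LocSat T ↔ Lam (rowF T) := by
  constructor
  · intro hT i j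
    by_cases hij : i = j
    · left; rw [hij]
    by_cases heq : rowF T i = rowF T j
    · left; exact heq
    right
    rw [Finset.disjoint_left]
    intro c hci hcj
    rw [mem_rowF] at hci hcj
    have hne : ¬ ∀ d, d ∈ rowF T i ↔ d ∈ rowF T j := fun h => heq (Finset.ext h)
    push_neg at hne
    obtain ⟨d, hd⟩ := hne
    rcases hd with ⟨hdi, hdj⟩ | ⟨hdj, hdi⟩
    · rw [mem_rowF] at hdi hdj
      have hcd : c ≠ d := fun h => hdj (h ▸ hcj)
      exact hT i j c d hij hcd (Or.inl ⟨hci, hdi, hcj, hdj⟩)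
    · rw [mem_rowF] at hdi hdj
      have hcd : c ≠ d := fun h => hdj (h ▸ hci)
      exact hT j i c d (Ne.symm hij) hcd (Or.inl ⟨hcj, hdi, hci, hdj⟩)
  · intro hL i₁ i₂ j₁ j₂ _hi _hj H
    rcases hL i₁ i₂ with h | h
    · have hiff : ∀ d : Fin n, (i₁, d) ∈ T ↔ (i₂, d) ∈ T := by
        intro d
        rw [← mem_rowF, ← mem_rowF, h]
      rcases H with ⟨h1, h2, h3, h4⟩ | ⟨h1, h2, h3, h4⟩ | ⟨h1, h2, h3, h4⟩ | ⟨h1, h2, h3, h4⟩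
      · exact h4 ((hiff j₂).mp h2)
      · exact h3 ((hiff j₁).mp h1)
      · exact h2 ((hiff j₂).mpr h4)
      · exact h1 ((hiff j₁).mpr h3)
    · have hdis : ∀ d : Fin n, (i₁, d) ∈ T → (i₂, d) ∈ T → False := by
        intro d h1 h2
        exact Finset.disjoint_left.mp h (mem_rowF.mpr h1) (mem_rowF.mpr h2)
      rcases H with ⟨h1, h2, h3, h4⟩ | ⟨h1, h2, h3, h4⟩ | ⟨h1, h2, h3, h4⟩ | ⟨h1, h2, h3, h4⟩
      · exact hdis j₁ h1 h3
      · exact hdis j₂ h2 h4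
      · exact hdis j₁ h1 h3
      · exact hdis j₂ h2 h4

/-- tableaux with LocSat correspond to laminar functions -/
def eqM (a b : ℕ) : {T : Finset (Fin a × Fin b) // LocSat T} ≃ Mf a b where
  toFun T := ⟨rowF T.1, (locSat_iff T.1).mp T.2⟩
  invFun f := ⟨tabOf f.1, (locSat_iff _).mpr (by rw [rowF_tabOf]; exact f.2)⟩
  left_inv T := Subtype.ext (tabOf_rowF T.1)
  right_inv f := Subtype.ext (rowF_tabOf f.1)

lemma alphaLS_eq' (a b : ℕ) :
    (Nat.card {T : Finset (Fin a × Fin b) // LocSat T}) = Nat.card (Mf a b) :=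
  Nat.card_congr (eqM a b)


open Finset



open Finset

/-- zone condition at the level of row functions -/
def ZC (m n p q : ℕ) (f : Fin m → Finset (Fin n)) : Prop :=
  ∀ i : Fin m, ∀ j ∈ f i, (i.val < m - p ∧ q ≤ j.val) ∨ (m - p ≤ i.val ∧ j.val < q)

lemma Lam.comp {ι κ ι' κ' : Type*} [Fintype κ'] [DecidableEq κ]
    {f : ι → Finset κ} (hf : Lam f) (r : ι' → ι) (e : κ' → κ) :
    Lam (fun i => univ.filter fun j => e j ∈ f (r i)) := by
  intro i i'
  rcases hf (r i) (r i') with h | h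
  · left; simp only [h]
  · right
    rw [Finset.disjoint_left]
    intro x hx hx'
    simp only [mem_filter, mem_univ, true_and] at hx hx'
    exact (Finset.disjoint_left.mp h hx) hx'

lemma disjoint_map_of {α β : Type*} {e : α ↪ β} {s t : Finset α} (h : Disjoint s t) :
    Disjoint (s.map e) (t.map e) := by
  rw [Finset.disjoint_left] at h ⊢
  rintro x hx hx'
  rw [Finset.mem_map] at hx hx'
  obtain ⟨a, ha, rfl⟩ := hx
  obtain ⟨a', ha', he⟩ := hx'
  rw [e.injective he] at ha'
  exact h ha ha'

lemma fin_ext' {n : ℕ} {x y : Fin n} (h : x.val = y.val) : x = y := Fin.ext h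

def eqLSTfun (m n p q : ℕ) :
    (LST m n p q) ≃ {f : Fin m → Finset (Fin n) // Lam f ∧ ZC m n p q f} where
  toFun T := ⟨rowF T.1, (locSat_iff _).mp T.2.1, by
    intro i j hj
    have := T.2.2 (i, j) (mem_rowF.mp hj)
    simp only [zoneF, Set.mem_setOf_eq] at this
    omega⟩
  invFun f := ⟨tabOf f.1, ⟨(locSat_iff _).mpr (by rw [rowF_tabOf]; exact f.2.1), by
    intro x hx hz
    have h1 := f.2.2 x.1 x.2 (mem_tabOf.mp hx)
    simp only [zoneF, Set.mem_setOf_eq] at hz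
    omega⟩⟩
  left_inv T := Subtype.ext (tabOf_rowF T.1)
  right_inv f := Subtype.ext (rowF_tabOf f.1)

section Split

variable (m n p q : ℕ) (hm : p ≤ m) (hn : q ≤ n)

/-- the row function on the full grid built from the two blocks -/
def joinF (g2 : Fin (m - p) → Finset (Fin (n - q))) (g1 : Fin p → Finset (Fin q)) :
    Fin m → Finset (Fin n) := fun i => univ.filter fun j =>
  (∃ i' : Fin (m - p), ∃ j' : Fin (n - q), i.val = i'.val ∧ j.val = q + j'.val ∧ j' ∈ g2 i') ∨
  (∃ i' : Fin p, ∃ j' : Fin q, i.val = (m - p) + i'.val ∧ j.val = j'.val ∧ j' ∈ g1 i')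

variable {m n p q}

lemma mem_joinF_top {g2 : Fin (m - p) → Finset (Fin (n - q))} {g1 : Fin p → Finset (Fin q)}
    {i : Fin m} {j : Fin n} (hi : i.val < m - p) :
    j ∈ joinF m n p q g2 g1 i ↔ ∃ j' : Fin (n - q), j.val = q + j'.val ∧ j' ∈ g2 ⟨i.val, hi⟩ := by
  simp only [joinF, mem_filter, mem_univ, true_and]
  constructor
  · rintro (⟨i', j', hii, hjj, hmem⟩ | ⟨i', j', hii, hjj, hmem⟩)
    · refine ⟨j', hjj, ?_⟩
      have : i' = ⟨i.val, hi⟩ := fin_ext' hii.symm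
      rwa [← this]
    · omega
  · rintro ⟨j', hjj, hmem⟩
    exact Or.inl ⟨⟨i.val, hi⟩, j', rfl, hjj, hmem⟩

lemma mem_joinF_bot {g2 : Fin (m - p) → Finset (Fin (n - q))} {g1 : Fin p → Finset (Fin q)}
    {i : Fin m} {j : Fin n} (hi : ¬ i.val < m - p) (hip : i.val - (m - p) < p) :
    j ∈ joinF m n p q g2 g1 i ↔
      ∃ j' : Fin q, j.val = j'.val ∧ j' ∈ g1 ⟨i.val - (m - p), hip⟩ := by
  simp only [joinF, mem_filter, mem_univ, true_and]
  constructor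
  · rintro (⟨i', j', hii, hjj, hmem⟩ | ⟨i', j', hii, hjj, hmem⟩)
    · omega
    · refine ⟨j', hjj, ?_⟩
      have : i' = ⟨i.val - (m - p), hip⟩ := fin_ext' (show i'.val = i.val - (m - p) by omega)
      rwa [← this]
  · rintro ⟨j', hjj, hmem⟩
    exact Or.inr ⟨⟨i.val - (m - p), hip⟩, j',
      show i.val = (m - p) + (i.val - (m - p)) by omega, hjj, hmem⟩

def eqSplit :
    {f : Fin m → Finset (Fin n) // Lam f ∧ ZC m n p q f} ≃ Mf (m - p) (n - q) × Mf p q where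
  toFun f :=
    (⟨fun i => univ.filter fun j =>
        ((⟨q + j.val, by have := j.isLt; omega⟩ : Fin n)) ∈ f.1 ⟨i.val, by have := i.isLt; omega⟩,
      Lam.comp f.2.1 _ _⟩,
     ⟨fun i => univ.filter fun j =>
        ((⟨j.val, by have := j.isLt; omega⟩ : Fin n)) ∈ f.1 ⟨(m - p) + i.val, by have := i.isLt; omega⟩,
      Lam.comp f.2.1 _ _⟩)
  invFun g := ⟨joinF m n p q g.1.1 g.2.1, by
    have hbp : ∀ i : Fin m, ¬ i.val < m - p → i.val - (m - p) < p := by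
      intro i h; have := i.isLt; omega
    constructor
    · intro i i'
      by_cases hi : i.val < m - p <;> by_cases hi' : i'.val < m - p
      · rcases g.1.2 ⟨i.val, hi⟩ ⟨i'.val, hi'⟩ with h | h
        · left; ext j
          rw [mem_joinF_top hi, mem_joinF_top hi', h]
        · right; rw [Finset.disjoint_left]
          intro j hj hj'
          rw [mem_joinF_top hi] at hj
          rw [mem_joinF_top hi'] at hj'
          obtain ⟨j1, hv1, hm1⟩ := hj
          obtain ⟨j2, hv2, hm2⟩ := hj'
          have : j1 = j2 := fin_ext' (by omega)
          exact (Finset.disjoint_left.mp h hm1) (this ▸ hm2)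
      · right; rw [Finset.disjoint_left]
        intro j hj hj'
        rw [mem_joinF_top hi] at hj
        rw [mem_joinF_bot hi' (hbp i' hi')] at hj'
        obtain ⟨j1, hv1, _⟩ := hj
        obtain ⟨j2, hv2, _⟩ := hj'
        have := j2.isLt
        omega
      · right; rw [Finset.disjoint_left]
        intro j hj hj'
        rw [mem_joinF_bot hi (hbp i hi)] at hj
        rw [mem_joinF_top hi'] at hj'
        obtain ⟨j1, hv1, _⟩ := hj
        obtain ⟨j2, hv2, _⟩ := hj'
        have := j1.isLt
        omega
      · rcases g.2.2 ⟨i.val - (m - p), hbp i hi⟩ ⟨i'.val - (m - p), hbp i' hi'⟩ with h | h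
        · left; ext j
          rw [mem_joinF_bot hi (hbp i hi), mem_joinF_bot hi' (hbp i' hi'), h]
        · right; rw [Finset.disjoint_left]
          intro j hj hj'
          rw [mem_joinF_bot hi (hbp i hi)] at hj
          rw [mem_joinF_bot hi' (hbp i' hi')] at hj'
          obtain ⟨j1, hv1, hm1⟩ := hj
          obtain ⟨j2, hv2, hm2⟩ := hj'
          have : j1 = j2 := fin_ext' (by omega)
          exact (Finset.disjoint_left.mp h hm1) (this ▸ hm2)
    · intro i j hj
      by_cases hi : i.val < m - p
      · rw [mem_joinF_top hi] at hj
        obtain ⟨j', hv, _⟩ := hj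
        left; exact ⟨hi, by omega⟩
      · have hip : i.val - (m - p) < p := by have := i.isLt; omega
        rw [mem_joinF_bot hi hip] at hj
        obtain ⟨j', hv, _⟩ := hj
        have := j'.isLt
        right; exact ⟨by omega, by omega⟩⟩
  left_inv := by
    rintro ⟨f, hlam, hzc⟩
    apply Subtype.ext
    funext i
    ext j
    dsimp only
    by_cases hi : i.val < m - p
    · rw [mem_joinF_top hi]
      simp only [mem_filter, mem_univ, true_and]
      constructor
      · rintro ⟨j', hv, hmem⟩
        have h1 : (⟨q + j'.val, by have := j'.isLt; omega⟩ : Fin n) = j :=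
          fin_ext' (show q + j'.val = j.val by omega)
        have h2 : (⟨(⟨i.val, hi⟩ : Fin (m - p)).val, by omega⟩ : Fin m) = i := fin_ext' rfl
        rwa [h1, h2] at hmem
      · intro hj
        have hq : q ≤ j.val := by
          rcases hzc i j hj with h | h
          · exact h.2
          · omega
        refine ⟨⟨j.val - q, by have := j.isLt; omega⟩,
          show j.val = q + (j.val - q) by omega, ?_⟩
        simp only [mem_filter, mem_univ, true_and]
        have h1 : (⟨q + (j.val - q), by have := j.isLt; omega⟩ : Fin n) = j :=
          fin_ext' (show q + (j.val - q) = j.val by omega)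
        have h2 : (⟨(⟨i.val, hi⟩ : Fin (m - p)).val, by omega⟩ : Fin m) = i := fin_ext' rfl
        rw [h1, h2]
        exact hj
    · have hip : i.val - (m - p) < p := by have := i.isLt; omega
      rw [mem_joinF_bot hi hip]
      constructor
      · rintro ⟨j', hv, hmem⟩
        simp only [mem_filter, mem_univ, true_and] at hmem
        have h1 : (⟨j'.val, by have := j'.isLt; omega⟩ : Fin n) = j :=
          fin_ext' (show j'.val = j.val by omega)
        have h2 : (⟨(m - p) + (⟨i.val - (m - p), hip⟩ : Fin p).val, by omega⟩ : Fin m) = i :=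
          fin_ext' (show (m - p) + (i.val - (m - p)) = i.val by omega)
        rwa [h1, h2] at hmem
      · intro hj
        have hq : j.val < q := by
          rcases hzc i j hj with h | h
          · omega
          · exact h.2
        refine ⟨⟨j.val, hq⟩, rfl, ?_⟩
        simp only [mem_filter, mem_univ, true_and]
        have h1 : (⟨j.val, by have := j.isLt; omega⟩ : Fin n) = j := fin_ext' rfl
        have h2 : (⟨(m - p) + (⟨i.val - (m - p), hip⟩ : Fin p).val, by omega⟩ : Fin m) = i :=
          fin_ext' (show (m - p) + (i.val - (m - p)) = i.val by omega)
        rw [h1, h2]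
        exact hj
  right_inv := by
    rintro ⟨⟨g2, hg2⟩, ⟨g1, hg1⟩⟩
    refine Prod.ext (Subtype.ext ?_) (Subtype.ext ?_)
    · funext i
      ext j
      simp only [mem_filter, mem_univ, true_and]
      rw [mem_joinF_top (show ((⟨i.val, by have := i.isLt; omega⟩ : Fin m)).val < m - p from i.isLt)]
      constructor
      · rintro ⟨j', hv, hmem⟩
        have hv' : q + j.val = q + j'.val := hv
        have hj' : j' = j := fin_ext' (by omega)
        have hi' : (⟨(⟨i.val, by have := i.isLt; omega⟩ : Fin m).val, i.isLt⟩ : Fin (m - p)) = i :=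
          fin_ext' rfl
        rw [hj', hi'] at hmem
        exact hmem
      · intro hj
        refine ⟨j, rfl, ?_⟩
        have hi' : (⟨(⟨i.val, by have := i.isLt; omega⟩ : Fin m).val, i.isLt⟩ : Fin (m - p)) = i :=
          fin_ext' rfl
        rw [hi']
        exact hj
    · funext i
      ext j
      simp only [mem_filter, mem_univ, true_and]
      have hcond : ¬ ((⟨(m - p) + i.val, by have := i.isLt; omega⟩ : Fin m)).val < m - p :=
        show ¬ ((m - p) + i.val < m - p) by omega
      have hip : ((⟨(m - p) + i.val, by have := i.isLt; omega⟩ : Fin m)).val - (m - p) < p :=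
        show (m - p) + i.val - (m - p) < p by have := i.isLt; omega
      rw [mem_joinF_bot hcond hip]
      constructor
      · rintro ⟨j', hv, hmem⟩
        have hv' : (j.val : ℕ) = j'.val := hv
        have hj' : j' = j := fin_ext' (by omega)
        have hi' : (⟨(⟨(m - p) + i.val, by have := i.isLt; omega⟩ : Fin m).val - (m - p), hip⟩ :
            Fin p) = i := fin_ext' (show (m - p) + i.val - (m - p) = i.val by omega)
        rw [hj', hi'] at hmem
        exact hmem
      · intro hj
        refine ⟨j, rfl, ?_⟩
        have hi' : (⟨(⟨(m - p) + i.val, by have := i.isLt; omega⟩ : Fin m).val - (m - p), hip⟩ :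
            Fin p) = i := fin_ext' (show (m - p) + i.val - (m - p) = i.val by omega)
        rw [hi']
        exact hj

end Split

lemma card_LST (m n p q : ℕ) (hm : p ≤ m) (hn : q ≤ n) :
    Nat.card (LST m n p q) = alphaLS p q * alphaLS (m - p) (n - q) := by
  rw [Nat.card_congr ((eqLSTfun m n p q).trans (eqSplit hm hn)), Nat.card_prod]
  rw [alphaLS, alphaLS, alphaLS_eq', alphaLS_eq', Nat.mul_comm]

/-! ## The core encoding: M(p,q'+1) × M(a'+1,b) ↪ Bool × M(p⊕a', q'⊕b) -/

section Core

variable {p q' a' b : ℕ}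

def GoodV (g₁ : Fin p → Finset (Fin q')) (V : Finset (Fin p)) : Prop :=
  (∀ i ∈ V, ∀ j ∈ V, g₁ i = g₁ j) ∧ ∀ i ∈ V, ∀ j, j ∉ V → Disjoint (g₁ i) (g₁ j)

def GoodU (g₂ : Fin a' → Finset (Fin b)) (U : Finset (Fin b)) : Prop :=
  ∀ r, g₂ r = U ∨ Disjoint (g₂ r) U

def Vset (f₁ : Fin p → Finset (Fin (q' + 1))) : Finset (Fin p) :=
  univ.filter fun i => Fin.last q' ∈ f₁ i

def drop₁ (f₁ : Fin p → Finset (Fin (q' + 1))) : Fin p → Finset (Fin q') :=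
  fun i => univ.filter fun j => j.castSucc ∈ f₁ i

def Uset (f₂ : Fin (a' + 1) → Finset (Fin b)) : Finset (Fin b) := f₂ (Fin.last a')

def drop₂ (f₂ : Fin (a' + 1) → Finset (Fin b)) : Fin a' → Finset (Fin b) :=
  fun r => f₂ r.castSucc

def used₂ (g₂ : Fin a' → Finset (Fin b)) : Finset (Fin a') :=
  univ.filter fun r => (g₂ r).Nonempty

def U0 [NeZero b] (g₂ : Fin a' → Finset (Fin b)) : Finset (Fin b) :=
  if h : (used₂ g₂).Nonempty then g₂ ((used₂ g₂).min' h) else {(0 : Fin b)}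

def used₁ (g₁ : Fin p → Finset (Fin q')) : Finset (Fin p) :=
  univ.filter fun i => (g₁ i).Nonempty

def V0 [NeZero p] (g₁ : Fin p → Finset (Fin q')) : Finset (Fin p) :=
  if h : (used₁ g₁).Nonempty then univ.filter (fun i => g₁ i = g₁ ((used₁ g₁).min' h))
  else {(0 : Fin p)}

lemma U0_nonempty [NeZero b] (g₂ : Fin a' → Finset (Fin b)) : (U0 g₂).Nonempty := by
  unfold U0
  split
  · next h => exact (mem_filter.mp ((used₂ g₂).min'_mem h)).2
  · exact singleton_nonempty _

lemma V0_nonempty [NeZero p] (g₁ : Fin p → Finset (Fin q')) : (V0 g₁).Nonempty := by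
  unfold V0
  split
  · next h =>
    refine ⟨(used₁ g₁).min' h, ?_⟩
    simp
  · exact singleton_nonempty _

lemma goodV_Vset {f₁ : Fin p → Finset (Fin (q' + 1))} (hf : Lam f₁) :
    GoodV (drop₁ f₁) (Vset f₁) := by
  constructor
  · intro i hi j hj
    simp only [Vset, mem_filter, mem_univ, true_and] at hi hj
    rcases hf i j with h | h
    · simp only [drop₁, h]
    · exact absurd (Finset.disjoint_left.mp h hi hj) (fun _ => by trivial)
  · intro i hi j hj
    simp only [Vset, mem_filter, mem_univ, true_and] at hi hj
    rcases hf i j with h | h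
    · exact absurd (h ▸ hi) hj
    · rw [Finset.disjoint_left]
      intro z hz hz'
      simp only [drop₁, mem_filter, mem_univ, true_and] at hz hz'
      exact (Finset.disjoint_left.mp h hz) hz'

lemma goodU_Uset {f₂ : Fin (a' + 1) → Finset (Fin b)} (hf : Lam f₂) :
    GoodU (drop₂ f₂) (Uset f₂) := fun r => hf r.castSucc (Fin.last a')

lemma goodV_V0 [NeZero p] {g₁ : Fin p → Finset (Fin q')} (hl : Lam g₁) :
    GoodV g₁ (V0 g₁) := by
  unfold V0
  split
  · next h =>
    constructor
    · intro i hi j hj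
      simp only [mem_filter, mem_univ, true_and] at hi hj
      rw [hi, hj]
    · intro i hi j hj
      simp only [mem_filter, mem_univ, true_and] at hi hj
      rcases hl i j with h' | h'
      · exact absurd (h' ▸ hi) hj
      · exact h'
  · next h =>
    have hall : ∀ i, g₁ i = ∅ := by
      intro i
      by_contra hne
      exact h ⟨i, by simp [used₁, Finset.nonempty_iff_ne_empty, hne]⟩
    exact ⟨fun i _ j _ => by rw [hall i, hall j], fun i _ j _ => by simp [hall i]⟩

lemma goodU_U0 [NeZero b] {g₂ : Fin a' → Finset (Fin b)} (hl : Lam g₂) :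
    GoodU g₂ (U0 g₂) := by
  unfold U0
  split
  · next h => exact fun r => hl r _
  · next h =>
    have hall : ∀ r, g₂ r = ∅ := by
      intro r
      by_contra hne
      exact h ⟨r, by simp [used₂, Finset.nonempty_iff_ne_empty, hne]⟩
    exact fun r => Or.inr (by simp [hall r])

lemma goodV_empty {g₁ : Fin p → Finset (Fin q')} : GoodV g₁ ∅ :=
  ⟨fun i hi => absurd hi (by simp), fun i hi => absurd hi (by simp)⟩

lemma goodU_empty {g₂ : Fin a' → Finset (Fin b)} : GoodU g₂ ∅ :=
  fun r => Or.inr (by simp)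

def buildh (g₁ : Fin p → Finset (Fin q')) (g₂ : Fin a' → Finset (Fin b))
    (V : Finset (Fin p)) (U : Finset (Fin b)) :
    Fin p ⊕ Fin a' → Finset (Fin q' ⊕ Fin b)
  | .inl i => (g₁ i).map (Function.Embedding.inl) ∪
      (if i ∈ V then U.map (Function.Embedding.inr) else ∅)
  | .inr r => (g₂ r).map (Function.Embedding.inr) ∪
      (if g₂ r = U then (V.biUnion g₁).map (Function.Embedding.inl) else ∅)

variable {g₁ : Fin p → Finset (Fin q')} {g₂ : Fin a' → Finset (Fin b)}
  {V : Finset (Fin p)} {U : Finset (Fin b)}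

@[simp] lemma mem_buildh_ll {i : Fin p} {j : Fin q'} :
    Sum.inl j ∈ buildh g₁ g₂ V U (Sum.inl i) ↔ j ∈ g₁ i := by
  by_cases h : i ∈ V <;> simp [buildh, h]

@[simp] lemma mem_buildh_lr {i : Fin p} {j : Fin b} :
    Sum.inr j ∈ buildh g₁ g₂ V U (Sum.inl i) ↔ i ∈ V ∧ j ∈ U := by
  by_cases h : i ∈ V <;> simp [buildh, h]

@[simp] lemma mem_buildh_rr {r : Fin a'} {j : Fin b} :
    Sum.inr j ∈ buildh g₁ g₂ V U (Sum.inr r) ↔ j ∈ g₂ r := by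
  by_cases h : g₂ r = U <;> simp [buildh, h]

@[simp] lemma mem_buildh_rl {r : Fin a'} {j : Fin q'} :
    Sum.inl j ∈ buildh g₁ g₂ V U (Sum.inr r) ↔ g₂ r = U ∧ j ∈ V.biUnion g₁ := by
  by_cases h : g₂ r = U <;> simp [buildh, h]

lemma biUnion_eq_of_mem (hV : GoodV g₁ V) {i : Fin p} (hi : i ∈ V) :
    V.biUnion g₁ = g₁ i := by
  ext z
  rw [Finset.mem_biUnion]
  constructor
  · rintro ⟨i'', hi'', hz⟩
    rwa [hV.1 i'' hi'' i hi] at hz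
  · intro hz
    exact ⟨i, hi, hz⟩

lemma lam_buildh (hl₁ : Lam g₁) (hl₂ : Lam g₂) (hV : GoodV g₁ V) (hU : GoodU g₂ U) :
    Lam (buildh g₁ g₂ V U) := by
  have key : ∀ (i : Fin p) (r : Fin a'),
      buildh g₁ g₂ V U (Sum.inl i) = buildh g₁ g₂ V U (Sum.inr r) ∨
      Disjoint (buildh g₁ g₂ V U (Sum.inl i)) (buildh g₁ g₂ V U (Sum.inr r)) := by
    intro i r
    by_cases hi : i ∈ V <;> by_cases hr : g₂ r = U
    · left
      ext z
      rcases z with z | z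
      · rw [mem_buildh_ll, mem_buildh_rl, biUnion_eq_of_mem hV hi]
        simp [hr]
      · rw [mem_buildh_lr, mem_buildh_rr, hr]
        simp [hi]
    · right
      rw [Finset.disjoint_left]
      rintro (z | z) hz hz'
      · rw [mem_buildh_rl] at hz'
        exact hr hz'.1
      · rw [mem_buildh_lr] at hz
        rw [mem_buildh_rr] at hz'
        rcases hU r with h | h
        · exact hr h
        · exact (Finset.disjoint_left.mp h hz') hz.2
    · right
      rw [Finset.disjoint_left]
      rintro (z | z) hz hz'
      · rw [mem_buildh_ll] at hz
        rw [mem_buildh_rl] at hz'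
        obtain ⟨i'', hi'', hz''⟩ := Finset.mem_biUnion.mp hz'.2
        exact (Finset.disjoint_left.mp (hV.2 i'' hi'' i hi) hz'') hz
      · rw [mem_buildh_lr] at hz
        exact hi hz.1
    · right
      rw [Finset.disjoint_left]
      rintro (z | z) hz hz'
      · rw [mem_buildh_rl] at hz'
        exact hr hz'.1
      · rw [mem_buildh_lr] at hz
        exact hi hz.1
  rintro (i | r) (i' | r')
  · by_cases hi : i ∈ V <;> by_cases hi' : i' ∈ V
    · left
      have hg : g₁ i = g₁ i' := hV.1 i hi i' hi'
      ext z
      rcases z with z | z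
      · rw [mem_buildh_ll, mem_buildh_ll, hg]
      · rw [mem_buildh_lr, mem_buildh_lr]
        simp [hi, hi']
    · right
      rw [Finset.disjoint_left]
      rintro (z | z) hz hz'
      · rw [mem_buildh_ll] at hz hz'
        exact (Finset.disjoint_left.mp (hV.2 i hi i' hi') hz) hz'
      · rw [mem_buildh_lr] at hz'
        exact hi' hz'.1
    · right
      rw [Finset.disjoint_left]
      rintro (z | z) hz hz'
      · rw [mem_buildh_ll] at hz hz'
        exact (Finset.disjoint_left.mp (hV.2 i' hi' i hi) hz') hz
      · rw [mem_buildh_lr] at hz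
        exact hi hz.1
    · rcases hl₁ i i' with h | h
      · left
        ext z
        rcases z with z | z
        · rw [mem_buildh_ll, mem_buildh_ll, h]
        · rw [mem_buildh_lr, mem_buildh_lr]
          simp [hi, hi']
      · right
        rw [Finset.disjoint_left]
        rintro (z | z) hz hz'
        · rw [mem_buildh_ll] at hz hz'
          exact (Finset.disjoint_left.mp h hz) hz'
        · rw [mem_buildh_lr] at hz
          exact hi hz.1
  · exact key i r'
  · rcases key i' r with h | h
    · left; exact h.symm
    · right; exact h.symm
  · by_cases hr : g₂ r = U <;> by_cases hr' : g₂ r' = U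
    · left
      have hg : g₂ r = g₂ r' := hr.trans hr'.symm
      ext z
      rcases z with z | z
      · rw [mem_buildh_rl, mem_buildh_rl]
        simp [hr, hr']
      · rw [mem_buildh_rr, mem_buildh_rr, hg]
    · right
      rw [Finset.disjoint_left]
      rintro (z | z) hz hz'
      · rw [mem_buildh_rl] at hz'
        exact hr' hz'.1
      · rw [mem_buildh_rr] at hz hz'
        rcases hU r' with h | h
        · exact hr' h
        · exact (Finset.disjoint_left.mp h hz') (hr ▸ hz)
    · right
      rw [Finset.disjoint_left]
      rintro (z | z) hz hz'
      · rw [mem_buildh_rl] at hz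
        exact hr hz.1
      · rw [mem_buildh_rr] at hz hz'
        rcases hU r with h | h
        · exact hr h
        · exact (Finset.disjoint_left.mp h hz) (hr' ▸ hz')
    · rcases hl₂ r r' with h | h
      · left
        ext z
        rcases z with z | z
        · rw [mem_buildh_rl, mem_buildh_rl, h]
        · rw [mem_buildh_rr, mem_buildh_rr, h]
      · right
        rw [Finset.disjoint_left]
        rintro (z | z) hz hz'
        · rw [mem_buildh_rl] at hz
          exact hr hz.1
        · rw [mem_buildh_rr] at hz hz'
          exact (Finset.disjoint_left.mp h hz) hz'

variable [NeZero p] [NeZero b]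

/-- the encoding map -/
def encode (f₁ : Fin p → Finset (Fin (q' + 1))) (f₂ : Fin (a' + 1) → Finset (Fin b)) :
    Bool × (Fin p ⊕ Fin a' → Finset (Fin q' ⊕ Fin b)) :=
  if (Vset f₁).Nonempty then
    (if (Uset f₂).Nonempty then (false, buildh (drop₁ f₁) (drop₂ f₂) (Vset f₁) (Uset f₂))
     else (true, buildh (drop₁ f₁) (drop₂ f₂) (Vset f₁) (U0 (drop₂ f₂))))
  else if (Uset f₂).Nonempty then
    (if Uset f₂ = U0 (drop₂ f₂) then (true, buildh (drop₁ f₁) (drop₂ f₂) ∅ ∅)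
     else (true, buildh (drop₁ f₁) (drop₂ f₂) (V0 (drop₁ f₁)) (Uset f₂)))
  else (false, buildh (drop₁ f₁) (drop₂ f₂) ∅ ∅)

def dec₁ (h : Fin p ⊕ Fin a' → Finset (Fin q' ⊕ Fin b)) : Fin p → Finset (Fin q') :=
  fun i => univ.filter fun j => Sum.inl j ∈ h (Sum.inl i)

def dec₂ (h : Fin p ⊕ Fin a' → Finset (Fin q' ⊕ Fin b)) : Fin a' → Finset (Fin b) :=
  fun r => univ.filter fun j => Sum.inr j ∈ h (Sum.inr r)

def decV (h : Fin p ⊕ Fin a' → Finset (Fin q' ⊕ Fin b)) : Finset (Fin p) :=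
  univ.filter fun i => ∃ j : Fin b, Sum.inr j ∈ h (Sum.inl i)

def decU (h : Fin p ⊕ Fin a' → Finset (Fin q' ⊕ Fin b)) : Finset (Fin b) :=
  (decV h).biUnion fun i => univ.filter fun j => Sum.inr j ∈ h (Sum.inl i)

def rebuild₁ (g₁ : Fin p → Finset (Fin q')) (V : Finset (Fin p)) :
    Fin p → Finset (Fin (q' + 1)) :=
  fun i => (g₁ i).map ⟨Fin.castSucc, Fin.castSucc_injective q'⟩ ∪
    (if i ∈ V then {Fin.last q'} else ∅)

def rebuild₂ (g₂ : Fin a' → Finset (Fin b)) (U : Finset (Fin b)) :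
    Fin (a' + 1) → Finset (Fin b) :=
  fun r => Fin.lastCases U g₂ r

/-- the decoding map -/
def decode (ε : Bool) (h : Fin p ⊕ Fin a' → Finset (Fin q' ⊕ Fin b)) :
    (Fin p → Finset (Fin (q' + 1))) × (Fin (a' + 1) → Finset (Fin b)) :=
  let VU : Finset (Fin p) × Finset (Fin b) :=
    if (decV h).Nonempty then
      (if ε then (if decU h = U0 (dec₂ h) then (decV h, ∅) else (∅, decU h))
       else (decV h, decU h))
    else (∅, if ε then U0 (dec₂ h) else ∅)
  (rebuild₁ (dec₁ h) VU.1, rebuild₂ (dec₂ h) VU.2)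

lemma dec₁_buildh : dec₁ (buildh g₁ g₂ V U) = g₁ := by
  funext i; ext j; simp [dec₁]

lemma dec₂_buildh : dec₂ (buildh g₁ g₂ V U) = g₂ := by
  funext r; ext j; simp [dec₂]

lemma decV_buildh (hU : U.Nonempty) : decV (buildh g₁ g₂ V U) = V := by
  ext i
  simp only [decV, mem_filter, mem_univ, true_and, mem_buildh_lr]
  constructor
  · rintro ⟨j, hj, _⟩
    exact hj
  · intro hi
    obtain ⟨j, hj⟩ := hU
    exact ⟨j, hi, hj⟩

lemma decV_buildh_empty : decV (buildh g₁ g₂ V (∅ : Finset (Fin b))) = ∅ := by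
  ext i
  simp [decV]

lemma decU_buildh (hU : U.Nonempty) (hV : V.Nonempty) : decU (buildh g₁ g₂ V U) = U := by
  unfold decU
  rw [decV_buildh hU]
  ext j
  simp only [Finset.mem_biUnion, mem_filter, mem_univ, true_and, mem_buildh_lr]
  constructor
  · rintro ⟨i, hi, _, hj⟩
    exact hj
  · intro hj
    obtain ⟨i, hi⟩ := hV
    exact ⟨i, hi, hi, hj⟩

lemma rebuild₁_drop (f₁ : Fin p → Finset (Fin (q' + 1))) :
    rebuild₁ (drop₁ f₁) (Vset f₁) = f₁ := by
  funext i
  ext j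
  simp only [rebuild₁, Finset.mem_union, Finset.mem_map, drop₁, Vset, mem_filter, mem_univ,
    true_and, Function.Embedding.coeFn_mk]
  by_cases hj : j = Fin.last q'
  · subst hj
    constructor
    · rintro (⟨a, ha, hae⟩ | hmem)
      · exact absurd hae (Fin.castSucc_lt_last a).ne
      · split at hmem
        · next h => rwa [Finset.mem_singleton] at hmem; 
        · simp at hmem
    · intro hmem
      right
      rw [if_pos hmem]
      exact Finset.mem_singleton_self _
  · constructor
    · rintro (⟨a, ha, hae⟩ | hmem)
      · rwa [← hae]
      · split at hmem
        · rw [Finset.mem_singleton] at hmem; exact absurd hmem hj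
        · simp at hmem
    · intro hmem
      left
      exact ⟨j.castPred hj, by rwa [Fin.castSucc_castPred], Fin.castSucc_castPred j hj⟩

lemma rebuild₂_drop (f₂ : Fin (a' + 1) → Finset (Fin b)) :
    rebuild₂ (drop₂ f₂) (Uset f₂) = f₂ := by
  funext r
  unfold rebuild₂
  induction r using Fin.lastCases with
  | last => rw [Fin.lastCases_last]; rfl
  | cast r => rw [Fin.lastCases_castSucc]; rfl

lemma rebuild₁_drop_empty (f₁ : Fin p → Finset (Fin (q' + 1))) (hV : ¬ (Vset f₁).Nonempty) :
    rebuild₁ (drop₁ f₁) ∅ = f₁ := by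
  have : Vset f₁ = ∅ := Finset.not_nonempty_iff_eq_empty.mp hV
  rw [← this]
  exact rebuild₁_drop f₁

lemma rebuild₂_drop_empty (f₂ : Fin (a' + 1) → Finset (Fin b)) (hU : ¬ (Uset f₂).Nonempty) :
    rebuild₂ (drop₂ f₂) ∅ = f₂ := by
  have : Uset f₂ = ∅ := Finset.not_nonempty_iff_eq_empty.mp hU
  rw [← this]
  exact rebuild₂_drop f₂

theorem decode_encode (f₁ : Fin p → Finset (Fin (q' + 1))) (f₂ : Fin (a' + 1) → Finset (Fin b)) :
    decode (encode f₁ f₂).1 (encode f₁ f₂).2 = (f₁, f₂) := by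
  by_cases hV : (Vset f₁).Nonempty <;> by_cases hU : (Uset f₂).Nonempty
  · -- B1
    rw [encode, if_pos hV, if_pos hU]
    unfold decode
    rw [decV_buildh hU, decU_buildh hU hV, dec₁_buildh, dec₂_buildh]
    simp only [if_pos hV, Bool.false_eq_true, if_false]
    rw [rebuild₁_drop, rebuild₂_drop]
  · -- B3
    rw [encode, if_pos hV, if_neg hU]
    unfold decode
    have hU0 : (U0 (drop₂ f₂)).Nonempty := U0_nonempty _
    rw [decV_buildh hU0, decU_buildh hU0 hV, dec₁_buildh, dec₂_buildh]
    simp only [if_pos hV, if_true, if_pos rfl]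
    rw [rebuild₁_drop, rebuild₂_drop_empty f₂ hU]
  · by_cases hUU : Uset f₂ = U0 (drop₂ f₂)
    · -- B4
      rw [encode, if_neg hV, if_pos hU, if_pos hUU]
      unfold decode
      rw [decV_buildh_empty, dec₁_buildh, dec₂_buildh]
      simp only [Finset.not_nonempty_empty, if_false, if_true]
      rw [rebuild₁_drop_empty f₁ hV, ← hUU, rebuild₂_drop]
    · -- B5
      rw [encode, if_neg hV, if_pos hU, if_neg hUU]
      unfold decode
      have hV0 : (V0 (drop₁ f₁)).Nonempty := V0_nonempty _
      rw [decV_buildh hU, decU_buildh hU hV0, dec₁_buildh, dec₂_buildh]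
      simp only [if_pos hV0, if_true, if_neg hUU]
      rw [rebuild₁_drop_empty f₁ hV, rebuild₂_drop]
  · -- B2
    rw [encode, if_neg hV, if_neg hU]
    unfold decode
    rw [decV_buildh_empty, dec₁_buildh, dec₂_buildh]
    simp only [Finset.not_nonempty_empty, if_false, Bool.false_eq_true]
    rw [rebuild₁_drop_empty f₁ hV, rebuild₂_drop_empty f₂ hU]

/-- the encoding on laminar subtypes -/
def encodeM (x : {f : Fin p → Finset (Fin (q' + 1)) // Lam f} ×
    {f : Fin (a' + 1) → Finset (Fin b) // Lam f}) :
    Bool × {h : Fin p ⊕ Fin a' → Finset (Fin q' ⊕ Fin b) // Lam h} :=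
  ⟨(encode x.1.1 x.2.1).1, (encode x.1.1 x.2.1).2, by
    have hl₁ : Lam (drop₁ x.1.1) := by
      have := Lam.comp (f := x.1.1) x.1.2 (id) (Fin.castSucc)
      exact this
    have hl₂ : Lam (drop₂ x.2.1) := fun r r' => x.2.2 r.castSucc r'.castSucc
    unfold encode
    split_ifs
    · exact lam_buildh hl₁ hl₂ (goodV_Vset x.1.2) (goodU_Uset x.2.2)
    · exact lam_buildh hl₁ hl₂ (goodV_Vset x.1.2) (goodU_U0 hl₂)
    · exact lam_buildh hl₁ hl₂ goodV_empty goodU_empty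
    · exact lam_buildh hl₁ hl₂ (goodV_V0 hl₁) (goodU_Uset x.2.2)
    · exact lam_buildh hl₁ hl₂ goodV_empty goodU_empty⟩

theorem encodeM_injective : Function.Injective
    (encodeM (p := p) (q' := q') (a' := a') (b := b)) := by
  intro x y hxy
  have h1 : (encodeM x).1 = (encodeM y).1 := congrArg Prod.fst hxy
  have h2 : (encodeM x).2.1 = (encodeM y).2.1 := congrArg Subtype.val (congrArg Prod.snd hxy)
  have hx := decode_encode x.1.1 x.2.1
  have hy := decode_encode y.1.1 y.2.1
  have he1 : (encode x.1.1 x.2.1).1 = (encode y.1.1 y.2.1).1 := h1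
  have he2 : (encode x.1.1 x.2.1).2 = (encode y.1.1 y.2.1).2 := h2
  rw [he1, he2, hy] at hx
  exact Prod.ext (Subtype.ext (congrArg Prod.fst hx.symm)) (Subtype.ext (congrArg Prod.snd hx.symm))

end Core

/-! ## reindexing and final assembly -/

def lamReindex {ι ι' κ κ' : Type*} [DecidableEq κ] [DecidableEq κ'] (e : ι ≃ ι') (c : κ ≃ κ') :
    {f : ι → Finset κ // Lam f} ≃ {f : ι' → Finset κ' // Lam f} where
  toFun f := ⟨fun i => (f.1 (e.symm i)).map c.toEmbedding, by
    intro i j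
    rcases f.2 (e.symm i) (e.symm j) with h | h
    · left; dsimp only; rw [h]
    · right; exact disjoint_map_of h⟩
  invFun g := ⟨fun i => (g.1 (e i)).map c.symm.toEmbedding, by
    intro i j
    rcases g.2 (e i) (e j) with h | h
    · left; dsimp only; rw [h]
    · right; exact disjoint_map_of h⟩
  left_inv f := Subtype.ext (funext fun i => by
    ext x
    simp)
  right_inv g := Subtype.ext (funext fun i => by
    ext x
    simp)

def mfCongr {a b a' b' : ℕ} (h1 : a = a') (h2 : b = b') : Mf a b ≃ Mf a' b' :=
  lamReindex (finCongr h1) (finCongr h2)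

def boolToM : Bool → Mf 1 1 := fun ε =>
  ⟨fun _ => if ε then {0} else ∅, fun i j => Or.inl (by rw [Subsingleton.elim i j])⟩

lemma boolToM_injective : Function.Injective boolToM := by
  intro x y h
  cases x <;> cases y
  · rfl
  · exfalso
    have h2 := congrFun (congrArg Subtype.val h) 0
    simp only [boolToM, if_true, if_false, Bool.false_eq_true] at h2
    exact Finset.singleton_ne_empty _ h2.symm
  · exfalso
    have h2 := congrFun (congrArg Subtype.val h) 0
    simp only [boolToM, if_true, if_false, Bool.false_eq_true] at h2
    exact Finset.singleton_ne_empty _ h2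
  · rfl

lemma alphaLS_11 : alphaLS 1 1 = 2 := by
  have hall : ∀ T : Finset (Fin 1 × Fin 1), LocSat T := by
    intro T i₁ i₂ j₁ j₂ hi _ _
    exact hi (Subsingleton.elim i₁ i₂)
  rw [alphaLS, Nat.card_congr (Equiv.subtypeUnivEquiv hall), Nat.card_eq_fintype_card,
    Fintype.card_finset]
  norm_num


end LSTAux

/-- `#LST_{m,n}(p,q) = α_{p,q} · α_{m-p,n-q}`, there is an injection of
`LST_{m,n}(p,q)` into `LST_{m,n}(1,1)`, and consequently
`α_{p,q} · α_{m-p,n-q} ≤ 2 · α_{m-1,n-1}`. -/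
theorem card_LST_and_injection (m n p q : ℕ)
    (hp1 : 1 ≤ p) (hpm : p ≤ m - 1) (hq1 : 1 ≤ q) (hqn : q ≤ n - 1) :
    (Nat.card (LST m n p q) = alphaLS p q * alphaLS (m - p) (n - q)) ∧
    (∃ φ : LST m n p q → LST m n 1 1, Function.Injective φ) ∧
    (alphaLS p q * alphaLS (m - p) (n - q) ≤ 2 * alphaLS (m - 1) (n - 1)) := by
  have hm2 : 2 ≤ m := by omega
  have hn2 : 2 ≤ n := by omega
  have hpm' : p ≤ m := by omega
  have hqn' : q ≤ n := by omega
  haveI : NeZero p := ⟨by omega⟩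
  haveI : NeZero (n - q) := ⟨by omega⟩
  -- the injection
  set q' : ℕ := q - 1 with hq'
  set a' : ℕ := m - p - 1 with ha'
  set b : ℕ := n - q with hb
  let E1 := (LSTAux.eqLSTfun m n p q).trans (LSTAux.eqSplit hpm' hqn')
  let E2 : LSTAux.Mf (m - p) (n - q) × LSTAux.Mf p q ≃
      LSTAux.Mf p (q' + 1) × LSTAux.Mf (a' + 1) b :=
    (Equiv.prodComm _ _).trans
      (Equiv.prodCongr (LSTAux.mfCongr rfl (by omega)) (LSTAux.mfCongr (by omega) rfl))
  let eRow : Fin p ⊕ Fin a' ≃ Fin (m - 1) := finSumFinEquiv.trans (finCongr (by omega))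
  let eCol : Fin q' ⊕ Fin b ≃ Fin (n - 1) := finSumFinEquiv.trans (finCongr (by omega))
  let E3 : Bool × {h : Fin p ⊕ Fin a' → Finset (Fin q' ⊕ Fin b) // LSTAux.Lam h} →
      LSTAux.Mf (m - 1) (n - 1) × LSTAux.Mf 1 1 :=
    fun z => (LSTAux.lamReindex eRow eCol z.2, LSTAux.boolToM z.1)
  have hE3 : Function.Injective E3 := by
    intro x y h
    have h1 := congrArg Prod.fst h
    have h2 := congrArg Prod.snd h
    exact Prod.ext (LSTAux.boolToM_injective h2) ((LSTAux.lamReindex eRow eCol).injective h1)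
  let E4 := ((LSTAux.eqLSTfun m n 1 1).trans
    (LSTAux.eqSplit (show (1:ℕ) ≤ m by omega) (show (1:ℕ) ≤ n by omega))).symm
  let φ : LST m n p q → LST m n 1 1 :=
    fun T => E4 (E3 (LSTAux.encodeM (E2 (E1 T))))
  have hφ : Function.Injective φ :=
    E4.injective.comp (hE3.comp (LSTAux.encodeM_injective.comp
      (E2.injective.comp E1.injective)))
  have part1 : Nat.card (LST m n p q) = alphaLS p q * alphaLS (m - p) (n - q) :=
    LSTAux.card_LST m n p q hpm' hqn'
  refine ⟨part1, ⟨φ, hφ⟩, ?_⟩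
  have hcard : Nat.card (LST m n p q) ≤ Nat.card (LST m n 1 1) :=
    Nat.card_le_card_of_injective φ hφ
  rw [part1] at hcard
  rw [LSTAux.card_LST m n 1 1 (by omega) (by omega), LSTAux.alphaLS_11] at hcard
  exact hcard
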